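/- arXiv:math/0412091 — 2 statements merged into one kernel-verified Lean document; each statement's English description precedes it below -/
import Mathlib

section
/- Insertion and the reverse major index: with the notation of the insertion lemma (Des_L(σ) = {i_1 < ⋯ < i_s}, non-descents i_{s+1} > ⋯ > i_n listed right to left), for 1 ≤ k ≤ n and 0 ≤ t ≤ a-1, rmaj_{L,n}(φ_n(σ, i_k, t)) = rmaj_{L,n-1}(σ) + k if t ∈ L, and rmaj_{L,n}(φ_n(σ, i_k, t)) = rmaj_{L,n-1}(σ) + k - 1 if t ∉ L. -/
open Finset Polynomial
open scoped Classical

/-- An element of the wreath product `C_a ≀ S_n`, viewed as a colored permutation: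
the window is `[σ(1),…,σ(n)]` where `|σ(i)| = π(i)` (1-based) and the color of the
letter in position `i` is `c(i)`, i.e. `σ(i) = α^{c(i)} |σ(i)|`. -/
abbrev ColPerm (a n : ℕ) := Equiv.Perm (Fin n) × (Fin n → Fin a)

/-- A rank function realizing (a canonical choice of) the linear order `<_L` of
Regev–Roichman on the letters `α^t j` (encoded as the pair `(t, j)` with `1 ≤ j`)
together with `0` (encoded as `(t, 0)`): letters with color in `L` are negative,
ordered with larger absolute value smaller; letters with color not in `L` are
positive, ordered with larger absolute value larger; `x <_L y ↔ rkL L x < rkL L y`. -/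
def rkL {a : ℕ} (L : Finset (Fin a)) (x : Fin a × ℕ) : ℤ :=
  if x.2 = 0 then 0
  else if x.1 ∈ L then -((x.2 : ℤ) * a + (x.1 : ℤ)) else (x.2 : ℤ) * a + (x.1 : ℤ)

/-- The letter `σ(i)` (as a color/absolute-value pair) in position `i` (1-based) of
the window of `σ`; positions outside `{1,…,n}` give the letter `0`. -/
def wval {a n : ℕ} [NeZero a] (σ : ColPerm a n) (i : ℕ) : Fin a × ℕ :=
  if h : 1 ≤ i ∧ i ≤ n then (σ.2 ⟨i - 1, by omega⟩, (σ.1 ⟨i - 1, by omega⟩ : ℕ) + 1)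
  else (0, 0)

/-- The `L`-descent set `Des_L(σ) = {0 ≤ i ≤ n-1 : σ(i) >_L σ(i+1)}`, with `σ(0) := 0`. -/
def DesL {a n : ℕ} [NeZero a] (L : Finset (Fin a)) (σ : ColPerm a n) : Finset ℕ :=
  (Finset.range n).filter (fun i => rkL L (wval σ (i + 1)) < rkL L (wval σ i))

/-- The `L`-descent number `des_L(σ) = |Des_L(σ)|`. -/
def desL {a n : ℕ} [NeZero a] (L : Finset (Fin a)) (σ : ColPerm a n) : ℕ := (DesL L σ).card

/-- The `L`-reverse major index `rmaj_{L,n}(σ) = Σ_{i ∈ Des_L(σ)} (n - i)`. -/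
def rmajL {a n : ℕ} [NeZero a] (L : Finset (Fin a)) (σ : ColPerm a n) : ℕ :=
  ∑ i ∈ DesL L σ, (n - i)

/-- The insertion map `φ_{n+1}(σ, r, t) = [σ_1,…,σ_r, α^t (n+1), σ_{r+1},…,σ_n]`,
inserting the letter `α^t (n+1)` after position `r` in the window of `σ ∈ C_a ≀ S_n`. -/
def phi {a n : ℕ} (σ : ColPerm a n) (r : Fin (n + 1)) (t : Fin a) : ColPerm a (n + 1) :=
  (((Fin.revPerm.trans (Fin.cycleRange r.rev)).trans Fin.revPerm).trans
      ((finSuccEquivLast.trans (Equiv.optionCongr σ.1)).trans finSuccEquivLast.symm),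
   Fin.insertNth r t σ.2)

variable {a n : ℕ} [NeZero a]

lemma wval_snd_le (σ : ColPerm a n) (i : ℕ) : (wval σ i).2 ≤ n := by
  unfold wval; split
  · exact Nat.succ_le_of_lt (Fin.is_lt _)
  · exact Nat.zero_le n

lemma rk_new_lt (L : Finset (Fin a)) (t : Fin a) (ht : t ∈ L) (x : Fin a × ℕ) (hx : x.2 ≤ n) :
    rkL L (t, n + 1) < rkL L x := by
  have ha : 1 ≤ (a:ℤ) := by exact_mod_cast Nat.one_le_iff_ne_zero.mpr (NeZero.ne a)
  have ht' : (t:ℤ) < a := by exact_mod_cast t.is_lt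
  have hx1 : (x.1:ℤ) < a := by exact_mod_cast x.1.is_lt
  have hx1' : 0 ≤ (x.1:ℤ) := Int.natCast_nonneg _
  have ht0 : 0 ≤ (t:ℤ) := Int.natCast_nonneg _
  have hx2 : (x.2:ℤ) ≤ n := by exact_mod_cast hx
  have hx2' : 0 ≤ (x.2:ℤ) := Int.natCast_nonneg _
  simp only [rkL, Nat.succ_ne_zero, if_false, if_pos ht]
  push_cast
  split
  · nlinarith
  · split <;> nlinarith

lemma rk_new_gt (L : Finset (Fin a)) (t : Fin a) (ht : t ∉ L) (x : Fin a × ℕ) (hx : x.2 ≤ n) :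
    rkL L x < rkL L (t, n + 1) := by
  have ha : 1 ≤ (a:ℤ) := by exact_mod_cast Nat.one_le_iff_ne_zero.mpr (NeZero.ne a)
  have ht' : (t:ℤ) < a := by exact_mod_cast t.is_lt
  have hx1 : (x.1:ℤ) < a := by exact_mod_cast x.1.is_lt
  have hx1' : 0 ≤ (x.1:ℤ) := Int.natCast_nonneg _
  have ht0 : 0 ≤ (t:ℤ) := Int.natCast_nonneg _
  have hx2 : (x.2:ℤ) ≤ n := by exact_mod_cast hx
  have hx2' : 0 ≤ (x.2:ℤ) := Int.natCast_nonneg _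
  simp only [rkL, Nat.succ_ne_zero, if_false, if_neg ht]
  push_cast
  split
  · nlinarith
  · split <;> nlinarith

lemma phi_fst_apply {a n : ℕ} (σ : ColPerm a n) (r : Fin (n+1)) (t : Fin a) (x : Fin (n+1)) :
    ((phi σ r t).1 x : ℕ) =
      if h : (x:ℕ) < (r:ℕ) then (σ.1 ⟨x, by have := r.is_lt; omega⟩ : ℕ)
      else if h2 : (x:ℕ) = (r:ℕ) then n
      else (σ.1 ⟨(x:ℕ)-1, by have := x.is_lt; have := r.is_lt; omega⟩ : ℕ) := by
  have hrev : ∀ y : Fin (n+1), (y.rev : ℕ) = n - y := by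
    intro y; rw [Fin.val_rev]; omega
  simp only [phi, Equiv.trans_apply, Fin.revPerm_apply, Equiv.optionCongr_apply]
  split
  · next h =>
    -- x < r: rev x > rev r
    have h1 : r.rev < x.rev := by
      rw [Fin.lt_iff_val_lt_val, hrev, hrev]; have := r.is_lt; have := x.is_lt; omega
    rw [Fin.cycleRange_of_gt h1, Fin.rev_rev]
    have hx : x = Fin.castSucc ⟨(x:ℕ), by have := r.is_lt; omega⟩ := by
      apply Fin.ext; simp
    conv_lhs => rw [hx]
    rw [finSuccEquivLast_castSucc]
    simp [finSuccEquivLast_symm_some]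
  · next h =>
    split
    · next h2 =>
      have hx : x = r := Fin.ext h2
      subst hx
      rw [Fin.cycleRange_self]
      have : (0 : Fin (n+1)).rev = Fin.last n := by
        apply Fin.ext; simp [Fin.val_rev]
      rw [this, finSuccEquivLast_last]
      simp [finSuccEquivLast_symm_none]
    · next h2 =>
      -- x > r
      have h1 : x.rev < r.rev := by
        rw [Fin.lt_iff_val_lt_val, hrev, hrev]; have := r.is_lt; have := x.is_lt; omega
      rw [Fin.cycleRange_of_lt h1]
      have hv : ((x.rev + 1 : Fin (n+1)) : ℕ) = n - (x:ℕ) + 1 := by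
        rw [Fin.val_add_one_of_lt]
        · rw [hrev]
        · rw [Fin.lt_iff_val_lt_val, hrev, Fin.val_last]; omega
      have hrv : (((x.rev + 1 : Fin (n+1)).rev : ℕ)) = (x:ℕ) - 1 := by
        rw [hrev, hv]; have := x.is_lt; omega
      have hx : (x.rev + 1 : Fin (n+1)).rev = Fin.castSucc ⟨(x:ℕ)-1, by have := x.is_lt; omega⟩ := by
        apply Fin.ext; simp only [Fin.coe_castSucc]; exact hrv
      conv_lhs => rw [hx]
      rw [finSuccEquivLast_castSucc]
      simp [finSuccEquivLast_symm_some]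

lemma phi_snd_apply {a n : ℕ} (σ : ColPerm a n) (r : Fin (n+1)) (t : Fin a) (x : Fin (n+1)) :
    (phi σ r t).2 x =
      if h : (x:ℕ) < (r:ℕ) then σ.2 ⟨x, by have := r.is_lt; omega⟩
      else if h2 : (x:ℕ) = (r:ℕ) then t
      else σ.2 ⟨(x:ℕ)-1, by have := x.is_lt; have := r.is_lt; omega⟩ := by
  simp only [phi]
  split
  · next h =>
    have hx : x = r.succAbove ⟨(x:ℕ), by have := r.is_lt; omega⟩ := by
      rw [Fin.succAbove_of_castSucc_lt]
      · apply Fin.ext; simp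
      · rw [Fin.lt_iff_val_lt_val]; simpa using h
    conv_lhs => rw [hx]
    rw [Fin.insertNth_apply_succAbove]
  · next h =>
    split
    · next h2 =>
      have hx : x = r := Fin.ext h2
      subst hx; rw [Fin.insertNth_apply_same]
    · next h2 =>
      have hx : x = r.succAbove ⟨(x:ℕ)-1, by have := x.is_lt; omega⟩ := by
        rw [Fin.succAbove_of_le_castSucc]
        · apply Fin.ext; simp [Fin.val_succ]; omega
        · rw [Fin.le_iff_val_le_val]; simp; omega
      conv_lhs => rw [hx]
      rw [Fin.insertNth_apply_succAbove]


set_option maxHeartbeats 2000000 in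
lemma wval_phi (σ : ColPerm a n) (r : Fin (n+1)) (t : Fin a) (i : ℕ) :
    wval (phi σ r t) i =
      if 1 ≤ i ∧ i ≤ (r:ℕ) then wval σ i
      else if i = (r:ℕ)+1 then (t, n+1)
      else wval σ (i-1) := by
  have hrn : (r:ℕ) ≤ n := by have := r.is_lt; omega
  by_cases h : 1 ≤ i ∧ i ≤ n + 1
  · have hL : wval (phi σ r t) i
        = ((phi σ r t).2 ⟨i-1, by omega⟩, ((phi σ r t).1 ⟨i-1, by omega⟩ : ℕ) + 1) := by
      rw [wval, dif_pos h]
    rw [hL, phi_snd_apply, phi_fst_apply]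
    rcases lt_trichotomy (i-1) (r:ℕ) with hc | hc | hc
    · rw [dif_pos (by simpa using hc), dif_pos (by simpa using hc),
        if_pos ⟨h.1, by omega⟩, wval, dif_pos ⟨h.1, by omega⟩]
    · rw [dif_neg (by simp [hc]), dif_pos (by simpa using hc),
        dif_neg (by simp [hc]), dif_pos (by simpa using hc),
        if_neg (by omega), if_pos (by omega)]
    · rw [dif_neg (by simp; omega), dif_neg (by simp; omega),
        dif_neg (by simp; omega), dif_neg (by simp; omega),
        if_neg (by omega), if_neg (by omega), wval, dif_pos ⟨by omega, by omega⟩]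
  · have h0 : wval (phi σ r t) i = (0,0) := by rw [wval, dif_neg h]
    rw [h0, if_neg (by omega), if_neg (by omega), wval, dif_neg (by omega)]

lemma DesL_phi (L : Finset (Fin a)) (σ : ColPerm a n) (r : Fin (n+1)) (t : Fin a) :
    DesL L (phi σ r t) =
      ((DesL L σ).filter (fun i => i < (r:ℕ))) ∪
      ((DesL L σ).filter (fun j => (r:ℕ) < j)).image (· + 1) ∪
      (if t ∈ L then {(r:ℕ)} else if (r:ℕ) < n then {(r:ℕ)+1} else ∅) := by
  have hrn : (r:ℕ) ≤ n := by have := r.is_lt; omega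
  have hle : ∀ i : ℕ, i ≤ (r:ℕ) → wval (phi σ r t) i = wval σ i := by
    intro i hi
    rw [wval_phi]
    by_cases h1 : 1 ≤ i
    · rw [if_pos ⟨h1, hi⟩]
    · have h0 : i = 0 := by omega
      subst h0
      rw [if_neg (by omega), if_neg (by omega)]
  have hval : ∀ i : ℕ, (r:ℕ)+2 ≤ i → wval (phi σ r t) i = wval σ (i-1) := by
    intro i hi; rw [wval_phi, if_neg (by omega), if_neg (by omega)]
  have hmid : wval (phi σ r t) ((r:ℕ)+1) = (t, n+1) := by
    rw [wval_phi, if_neg (by omega), if_pos rfl]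
  ext i
  simp only [DesL, Finset.mem_union, Finset.mem_filter, Finset.mem_image, Finset.mem_range]
  constructor
  · rintro ⟨hin, hd⟩
    rcases lt_trichotomy i (r:ℕ) with hc | hc | hc
    · rw [hle (i+1) (by omega), hle i (by omega)] at hd
      exact Or.inl (Or.inl ⟨⟨by omega, hd⟩, hc⟩)
    · have hd' : rkL L (t, n+1) < rkL L (wval σ (r:ℕ)) := by
        rw [hc] at hd; rwa [hmid, hle _ le_rfl] at hd
      have ht : t ∈ L := by
        by_contra ht
        exact absurd hd' (not_lt.mpr (le_of_lt (rk_new_gt L t ht _ (wval_snd_le σ _))))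
      refine Or.inr ?_
      rw [if_pos ht, Finset.mem_singleton]
      exact hc
    · by_cases hc1 : i = (r:ℕ)+1
      · rw [hc1] at hd
        rw [hval ((r:ℕ)+2) (by omega), hmid] at hd
        have hd' : rkL L (wval σ ((r:ℕ)+1)) < rkL L (t, n+1) := by
          simpa using hd
        have ht : t ∉ L := by
          intro ht
          exact absurd hd' (not_lt.mpr (le_of_lt (rk_new_lt L t ht _ (wval_snd_le σ _))))
        refine Or.inr ?_
        rw [if_neg ht, if_pos (by omega), Finset.mem_singleton]
        exact hc1
      · rw [hval (i+1) (by omega), hval i (by omega)] at hd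
        refine Or.inl (Or.inr ⟨i-1, ⟨⟨by omega, ?_⟩, by omega⟩, by omega⟩)
        rw [show i-1+1 = i by omega]
        simpa using hd
  · rintro ((⟨⟨hin, hd⟩, hc⟩ | ⟨j, ⟨⟨hjn, hd⟩, hj⟩, rfl⟩) | he)
    · refine ⟨by omega, ?_⟩
      rw [hle (i+1) (by omega), hle i (by omega)]
      exact hd
    · refine ⟨by omega, ?_⟩
      rw [hval (j+1+1) (by omega), hval (j+1) (by omega)]
      simpa using hd
    · by_cases ht : t ∈ L
      · rw [if_pos ht, Finset.mem_singleton] at he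
        subst he
        refine ⟨by omega, ?_⟩
        rw [hmid, hle _ le_rfl]
        exact rk_new_lt L t ht _ (wval_snd_le σ _)
      · rw [if_neg ht] at he
        by_cases hrn' : (r:ℕ) < n
        · rw [if_pos hrn', Finset.mem_singleton] at he
          subst he
          refine ⟨by omega, ?_⟩
          rw [show (r:ℕ)+1+1 = (r:ℕ)+2 from rfl, hval ((r:ℕ)+2) (by omega), hmid]
          have := rk_new_gt L t ht (wval σ ((r:ℕ)+1)) (wval_snd_le σ _)
          simpa using this
        · rw [if_neg hrn'] at he
          exact absurd he (Finset.notMem_empty i)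

lemma rmajL_phi (L : Finset (Fin a)) (σ : ColPerm a n) (r : Fin (n+1)) (t : Fin a) :
    rmajL L (phi σ r t) =
      (∑ i ∈ (DesL L σ).filter (fun i => i < (r:ℕ)), (n - i))
      + ((DesL L σ).filter (fun i => i < (r:ℕ))).card
      + (∑ j ∈ (DesL L σ).filter (fun j => (r:ℕ) < j), (n - j))
      + (if t ∈ L then n+1-(r:ℕ) else n-(r:ℕ)) := by
  have hrn : (r:ℕ) ≤ n := by have := r.is_lt; omega
  have hDsub : ∀ i ∈ DesL L σ, i < n := fun i hi =>
    Finset.mem_range.1 (Finset.mem_filter.1 hi).1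
  have hd1 : Disjoint ((DesL L σ).filter (fun i => i < (r:ℕ)))
      (((DesL L σ).filter (fun j => (r:ℕ) < j)).image (· + 1)) := by
    rw [Finset.disjoint_left]
    rintro x hx hx2
    simp only [Finset.mem_filter, Finset.mem_image] at hx hx2
    obtain ⟨j, ⟨_, hj⟩, rfl⟩ := hx2
    omega
  have hd2 : Disjoint (((DesL L σ).filter (fun i => i < (r:ℕ))) ∪
      ((DesL L σ).filter (fun j => (r:ℕ) < j)).image (· + 1))
      (if t ∈ L then ({(r:ℕ)} : Finset ℕ) else if (r:ℕ) < n then {(r:ℕ)+1} else ∅) := by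
    rw [Finset.disjoint_right]
    intro x hx hx2
    have hx' : x = (r:ℕ) ∨ x = (r:ℕ)+1 := by
      split_ifs at hx with h1 h2
      · exact Or.inl (Finset.mem_singleton.1 hx)
      · exact Or.inr (Finset.mem_singleton.1 hx)
      · exact absurd hx (Finset.notMem_empty x)
    simp only [Finset.mem_union, Finset.mem_filter, Finset.mem_image] at hx2
    rcases hx2 with (⟨_, h⟩ | ⟨j, ⟨_, hj⟩, hje⟩) <;> omega
  rw [rmajL, DesL_phi, Finset.sum_union hd2, Finset.sum_union hd1]
  congr 1
  congr 1
  · -- sum over A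
    have h1 : ∀ i ∈ (DesL L σ).filter (fun i => i < (r:ℕ)), n + 1 - i = (n - i) + 1 := by
      intro i hi
      have := hDsub i (Finset.mem_filter.1 hi).1
      omega
    rw [Finset.sum_congr rfl h1, Finset.sum_add_distrib, Finset.sum_const, smul_eq_mul, mul_one]
  · -- sum over B
    rw [Finset.sum_image (fun x _ y _ h => by omega)]
    exact Finset.sum_congr rfl (fun j _ => by omega)
  · -- sum over E
    split_ifs with h1 h2
    · rw [Finset.sum_singleton]
    · rw [Finset.sum_singleton]; omega
    · rw [Finset.sum_empty]; omega

lemma sort_getD_mem (S : Finset ℕ) (j : ℕ) (hj : j < S.card) : (S.sort (· ≤ ·)).getD j 0 ∈ S := by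
  rw [List.getD_eq_getElem _ _ (by rwa [Finset.length_sort])]
  exact (Finset.mem_sort _).1 (List.getElem_mem _)

lemma sort_getD_eq_orderEmb (S : Finset ℕ) (j : ℕ) (hj : j < S.card) :
    (S.sort (· ≤ ·)).getD j 0 = S.orderEmbOfFin rfl ⟨j, hj⟩ := by
  rw [List.getD_eq_getElem _ _ (by rwa [Finset.length_sort]), Finset.orderEmbOfFin_apply]
  simp [Fin.getElem_fin]

lemma card_filter_lt_sort_getD (S : Finset ℕ) (j : ℕ) (hj : j < S.card) :
    (S.filter (fun y => y < (S.sort (· ≤ ·)).getD j 0)).card = j := by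
  rw [sort_getD_eq_orderEmb S j hj]
  set e := S.orderEmbOfFin rfl with he
  have hkey : S.filter (fun y => y < e ⟨j, hj⟩)
      = (Finset.univ.filter (fun i : Fin S.card => i < ⟨j, hj⟩)).image (fun i => e i) := by
    ext y
    simp only [Finset.mem_filter, Finset.mem_image, Finset.mem_univ, true_and]
    constructor
    · rintro ⟨hyS, hylt⟩
      have hy' : y ∈ Set.range e := by
        rw [he, Finset.range_orderEmbOfFin]; exact hyS
      obtain ⟨i, rfl⟩ := hy'
      exact ⟨i, (OrderEmbedding.lt_iff_lt e).1 hylt, rfl⟩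
    · rintro ⟨i, hij, rfl⟩
      exact ⟨Finset.orderEmbOfFin_mem S rfl i, (OrderEmbedding.lt_iff_lt e).2 hij⟩
  rw [hkey, Finset.card_image_of_injective _ (e.injective)]
  have : Finset.univ.filter (fun i : Fin S.card => i < ⟨j, hj⟩) = Finset.Iio ⟨j, hj⟩ := by
    ext i; simp
  rw [this, Fin.card_Iio]

lemma card_filter_gt_sort_getD (S : Finset ℕ) (j : ℕ) (hj : j < S.card) :
    (S.filter (fun y => (S.sort (· ≤ ·)).getD j 0 < y)).card = S.card - 1 - j := by
  rw [sort_getD_eq_orderEmb S j hj]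
  set e := S.orderEmbOfFin rfl with he
  have hkey : S.filter (fun y => e ⟨j, hj⟩ < y)
      = (Finset.univ.filter (fun i : Fin S.card => ⟨j, hj⟩ < i)).image (fun i => e i) := by
    ext y
    simp only [Finset.mem_filter, Finset.mem_image, Finset.mem_univ, true_and]
    constructor
    · rintro ⟨hyS, hylt⟩
      have hy' : y ∈ Set.range e := by
        rw [he, Finset.range_orderEmbOfFin]; exact hyS
      obtain ⟨i, rfl⟩ := hy'
      exact ⟨i, (OrderEmbedding.lt_iff_lt e).1 hylt, rfl⟩
    · rintro ⟨i, hij, rfl⟩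
      exact ⟨Finset.orderEmbOfFin_mem S rfl i, (OrderEmbedding.lt_iff_lt e).2 hij⟩
  rw [hkey, Finset.card_image_of_injective _ (e.injective)]
  have : Finset.univ.filter (fun i : Fin S.card => ⟨j, hj⟩ < i) = Finset.Ioi ⟨j, hj⟩ := by
    ext i; simp
  rw [this, Fin.card_Ioi]

lemma reverse_sort_getD (S : Finset ℕ) (j : ℕ) (hj : j < S.card) :
    ((S.sort (· ≤ ·)).reverse).getD j 0 = (S.sort (· ≤ ·)).getD (S.card - 1 - j) 0 := by
  have hlen : (S.sort (· ≤ ·)).length = S.card := Finset.length_sort _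
  rw [List.getD_eq_getElem _ _ (by rw [List.length_reverse, hlen]; exact hj),
    List.getD_eq_getElem _ _ (by omega), List.getElem_reverse]
  congr 1
  omega

/-- Insertion lemma, reverse-major-index part: with `Des_L(σ) = {i_1 < ⋯ < i_s}`,
non-descents `{i_{s+1} > ⋯ > i_{n+1}} = {0,…,n} \ Des_L(σ)` listed right to left
(`σ ∈ C_a ≀ S_n`), for `1 ≤ k ≤ n+1` and any color `t`:
`rmaj_{L,n+1}(φ(σ, i_k, t)) = rmaj_{L,n}(σ) + k` if `t ∈ L`, and
`rmaj_{L,n+1}(φ(σ, i_k, t)) = rmaj_{L,n}(σ) + k - 1` if `t ∉ L`. -/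
theorem rmajL_phi_insert {a n : ℕ} [NeZero a] (L : Finset (Fin a)) (σ : ColPerm a n)
    (s : ℕ) (hs : s = desL L σ) (k : ℕ) (hk1 : 1 ≤ k) (hk2 : k ≤ n + 1) (t : Fin a)
    (ik : ℕ)
    (hik : ik = if k ≤ s then ((DesL L σ).sort (· ≤ ·)).getD (k - 1) 0
      else (((Finset.range (n + 1) \ DesL L σ).sort (· ≤ ·)).reverse).getD (k - s - 1) 0)
    (r : Fin (n + 1)) (hr : (r : ℕ) = ik) :
    rmajL L (phi σ r t) =
      if t ∈ L then rmajL L σ + k else rmajL L σ + k - 1 := by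
  have hrn : (r:ℕ) ≤ n := by have := r.is_lt; omega
  have hDsub : ∀ i ∈ DesL L σ, i < n := fun i hi =>
    Finset.mem_range.1 (Finset.mem_filter.1 hi).1
  set D := DesL L σ with hD
  have hcard : D.card = s := by rw [hs]; rfl
  have hsn : s ≤ n := by
    rw [← hcard]
    calc D.card ≤ (Finset.range n).card := Finset.card_le_card (Finset.filter_subset _ _)
    _ = n := Finset.card_range n
  set SA := ∑ i ∈ D.filter (fun i => i < (r:ℕ)), (n - i) with hSA
  set SB := ∑ j ∈ D.filter (fun j => (r:ℕ) < j), (n - j) with hSB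
  set cA := (D.filter (fun i => i < (r:ℕ))).card with hcA
  have htau : rmajL L (phi σ r t) = SA + cA + SB + (if t ∈ L then n+1-(r:ℕ) else n-(r:ℕ)) :=
    rmajL_phi L σ r t
  have hnotlt : ¬ ((r:ℕ) ∈ D) →
      D.filter (fun i => ¬ i < (r:ℕ)) = D.filter (fun j => (r:ℕ) < j) := by
    intro hrD
    ext x
    simp only [Finset.mem_filter]
    constructor
    · rintro ⟨hx, hx2⟩
      refine ⟨hx, ?_⟩
      rcases Nat.lt_or_ge (r:ℕ) x with h | h
      · exact h
      · exfalso
        have hxr : x = (r:ℕ) := by omega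
        exact hrD (hxr ▸ hx)
    · rintro ⟨hx, hx2⟩; exact ⟨hx, by omega⟩
  have hsigma : rmajL L σ = SA + (if (r:ℕ) ∈ D then n - (r:ℕ) else 0) + SB := by
    rw [rmajL, ← Finset.sum_filter_add_sum_filter_not (DesL L σ) (fun i => i < (r:ℕ))]
    by_cases hrD : (r:ℕ) ∈ D
    · have heq : D.filter (fun i => ¬ i < (r:ℕ))
          = insert (r:ℕ) (D.filter (fun j => (r:ℕ) < j)) := by
        ext x
        simp only [Finset.mem_filter, Finset.mem_insert]
        constructor
        · rintro ⟨hx, hx2⟩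
          rcases Nat.lt_or_ge (r:ℕ) x with h | h
          · exact Or.inr ⟨hx, h⟩
          · exact Or.inl (by omega)
        · rintro (rfl | ⟨hx, hx2⟩)
          · exact ⟨hrD, by omega⟩
          · exact ⟨hx, by omega⟩
      rw [← hD, heq, Finset.sum_insert (by simp [Finset.mem_filter]), if_pos hrD, ← hSA, ← hSB]
      ring
    · rw [← hD, hnotlt hrD, if_neg hrD, ← hSA, ← hSB]
      ring
  by_cases hks : k ≤ s
  · have hrik : (r:ℕ) = (D.sort (· ≤ ·)).getD (k-1) 0 := by rw [hr, hik, if_pos hks]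
    have hk1' : k - 1 < D.card := by omega
    have hrD : (r:ℕ) ∈ D := by rw [hrik]; exact sort_getD_mem D (k-1) hk1'
    have hcAe : cA = k - 1 := by
      rw [hcA, hrik]
      exact card_filter_lt_sort_getD D (k-1) hk1'
    have hrltn : (r:ℕ) < n := hDsub _ hrD
    rw [htau, hsigma, if_pos hrD]
    split_ifs with ht <;> omega
  · set S' := Finset.range (n+1) \ D with hS'
    have hS'card : S'.card = n + 1 - s := by
      rw [hS', Finset.card_sdiff_of_subset
          (fun x hx => Finset.mem_range.2 (by have := hDsub x hx; omega)),
        Finset.card_range, hcard]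
    have hj : k - s - 1 < S'.card := by omega
    have hrik : (r:ℕ) = (S'.sort (· ≤ ·)).getD (S'.card - 1 - (k - s - 1)) 0 := by
      rw [hr, hik, if_neg hks, reverse_sort_getD S' _ hj]
    have hj' : S'.card - 1 - (k - s - 1) < S'.card := by omega
    have hrS' : (r:ℕ) ∈ S' := by rw [hrik]; exact sort_getD_mem S' _ hj'
    have hrD : (r:ℕ) ∉ D := (Finset.mem_sdiff.1 hrS').2
    have hgt : (S'.filter (fun y => (r:ℕ) < y)).card = k - s - 1 := by
      rw [hrik, card_filter_gt_sort_getD S' _ hj']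
      omega
    have hsplit : (Finset.range (n+1)).filter (fun y => (r:ℕ) < y)
        = D.filter (fun y => (r:ℕ) < y) ∪ S'.filter (fun y => (r:ℕ) < y) := by
      ext y
      simp only [Finset.mem_filter, Finset.mem_union, hS', Finset.mem_sdiff, Finset.mem_range]
      constructor
      · rintro ⟨h1, h2⟩
        by_cases hy : y ∈ D
        · exact Or.inl ⟨hy, h2⟩
        · exact Or.inr ⟨⟨h1, hy⟩, h2⟩
      · rintro (⟨hy, h2⟩ | ⟨⟨h1, _⟩, h2⟩)
        · exact ⟨by have := hDsub y hy; omega, h2⟩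
        · exact ⟨h1, h2⟩
    have hdisj : Disjoint (D.filter (fun y => (r:ℕ) < y)) (S'.filter (fun y => (r:ℕ) < y)) := by
      rw [Finset.disjoint_left]
      intro x hx hx2
      exact (Finset.mem_sdiff.1 (Finset.mem_filter.1 hx2).1).2 (Finset.mem_filter.1 hx).1
    have hico : (Finset.range (n+1)).filter (fun y => (r:ℕ) < y) = Finset.Ico ((r:ℕ)+1) (n+1) := by
      ext y
      simp only [Finset.mem_filter, Finset.mem_range, Finset.mem_Ico]
      omega
    have hcount : (D.filter (fun y => (r:ℕ) < y)).card + (k - s - 1) = n - (r:ℕ) := by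
      have h1 := congrArg Finset.card hsplit
      rw [Finset.card_union_of_disjoint hdisj, hgt, hico, Nat.card_Ico] at h1
      omega
    have hcA2 : cA + (D.filter (fun y => (r:ℕ) < y)).card = s := by
      rw [hcA, ← hcard]
      have h2 := Finset.card_filter_add_card_filter_not
        (s := D) (p := fun i => i < (r:ℕ))
      rw [hnotlt hrD] at h2
      exact h2
    have hrltn1 : (r:ℕ) < n + 1 := r.is_lt
    rw [htau, hsigma, if_neg hrD]
    split_ifs with ht <;> omega
end

section
/- Generalized Carlitz identity (exponential generating function form): for every a > 0 and 0 ≤ ℓ ≤ a, Σ_{n≥0} (u^n/n!) · A_{a,ℓ,n}(t,q)/(t;q)_{n+1} = Σ_{s≥0} t^s e^{u(a[s+1]_q − ℓ)}, as an identity of formal power series in u and t. -/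
open Finset Polynomial
open scoped Classical

/-- The two-variable generating polynomial
`A_{a,L,n}(t,q) = Σ_{σ ∈ C_a≀S_n} t^{des_L σ} q^{rmaj_{L,n} σ}`, with `t` the outer
variable and `q` the inner variable. -/
noncomputable def Amaj (a n : ℕ) [NeZero a] (L : Finset (Fin a)) :
    Polynomial (Polynomial ℚ) :=
  ∑ σ : ColPerm a n, Polynomial.C ((X : Polynomial ℚ) ^ rmajL L σ) * X ^ desL L σ

/-!
Expanding `(a[s+1]_q - ℓ)^n` gives the sum of `q^(h₁ + ⋯ + hₙ)` over the words assigning to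
each absolute value `k` a letter `(c, h)` with `h ≤ s`, and `h ≠ 0` when `c ∈ L`. Sorting the
letters of a word by height, and letters of equal height by `<_L`, produces a colored
permutation `σ` whose heights increase weakly along the positions and strictly across every
`L`-descent; at position `0` this is where `h ≠ 0` for colors in `L` enters. Subtracting from
each height the number of descents up to its position leaves an arbitrary weakly increasing
sequence bounded by `s - des_L σ`, and the subtracted amounts add up to `rmaj_{L,n} σ`. Weakly
increasing sequences of length `n` bounded by `m` are counted, by their sum, by the coefficient
of `t^m` in `1/(t;q)_{n+1}` (a `q`-Pascal recurrence). Hence the coefficient of `t^s` in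
`A_{a,L,n}(t,q)/(t;q)_{n+1}` is `(a[s+1]_q - ℓ)^n`.
-/

namespace Carlitz

section MonotoneSequences

variable {R : Type*} [CommRing R]

def monoSeqs (n m : ℕ) : Finset (Fin n → ℕ) :=
  {e ∈ Fintype.piFinset fun _ => range (m + 1) | Monotone e}

lemma mem_monoSeqs {n m : ℕ} {e : Fin n → ℕ} :
    e ∈ monoSeqs n m ↔ Monotone e ∧ ∀ i, e i ≤ m := by
  simp [monoSeqs, and_comm]

lemma monoSeqs_zero_left (m : ℕ) : monoSeqs 0 m = {Fin.elim0} := by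
  ext e
  simp only [mem_monoSeqs, IsEmpty.forall_iff, and_true, mem_singleton]
  exact ⟨fun _ => Subsingleton.elim _ _, fun _ i => i.elim0⟩

lemma monoSeqs_zero_right (n : ℕ) : monoSeqs n 0 = {0} := by
  ext e
  simp only [mem_monoSeqs, nonpos_iff_eq_zero, mem_singleton]
  exact ⟨fun h => funext h.2, fun h => h ▸ ⟨monotone_const, fun _ => rfl⟩⟩

lemma monotone_cons_zero {n : ℕ} {e : Fin n → ℕ} (he : Monotone e) :
    Monotone (Fin.cons 0 e : Fin (n + 1) → ℕ) := by
  intro i j hij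
  cases i using Fin.cases with
  | zero => exact Nat.zero_le _
  | succ i =>
    cases j using Fin.cases with
    | zero => exact absurd hij (by simp)
    | succ j => simpa using he (Fin.succ_le_succ_iff.1 hij)

lemma sum_monoSeqs_filter_eq_zero (x : R) (n m : ℕ) :
    ∑ e ∈ monoSeqs (n + 1) m with e 0 = 0, x ^ (∑ i, e i) =
      ∑ e ∈ monoSeqs n m, x ^ (∑ i, e i) := by
  refine sum_nbij' Fin.tail (fun e => (Fin.cons 0 e : Fin (n + 1) → ℕ)) (fun e he => ?_)
    (fun e he => ?_) (fun e he => ?_) (fun e _ => Fin.tail_cons _ _) (fun e he => ?_)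
  · simp only [mem_filter, mem_monoSeqs] at he ⊢
    exact ⟨he.1.1.comp (Fin.strictMono_succ.monotone), fun i => he.1.2 _⟩
  · simp only [mem_filter, mem_monoSeqs] at he ⊢
    refine ⟨⟨monotone_cons_zero he.1, fun i => ?_⟩, rfl⟩
    cases i using Fin.cases <;> simp [he.2]
  · simp only [mem_filter] at he
    rw [← he.2, Fin.cons_self_tail]
  · simp only [mem_filter] at he
    rw [Fin.sum_univ_succ, he.2, zero_add]
    rfl

lemma sum_monoSeqs_filter_ne_zero (x : R) (n m : ℕ) :
    ∑ e ∈ monoSeqs (n + 1) (m + 1) with e 0 ≠ 0, x ^ (∑ i, e i) =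
      x ^ (n + 1) * ∑ e ∈ monoSeqs (n + 1) m, x ^ (∑ i, e i) := by
  rw [mul_sum]
  refine sum_nbij' (fun e i => e i - 1) (fun e i => e i + 1) (fun e he => ?_) (fun e he => ?_)
    (fun e he => ?_) (fun e _ => by simp) (fun e he => ?_)
  all_goals simp only [mem_filter, mem_monoSeqs] at he ⊢
  · exact ⟨fun i j hij => Nat.sub_le_sub_right (he.1.1 hij) 1,
      fun i => by have := he.1.2 i; omega⟩
  · exact ⟨⟨fun i j hij => Nat.add_le_add_right (he.1 hij) 1,
      fun i => by have := he.2 i; omega⟩, by omega⟩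
  · funext i
    have := he.1.1 (Fin.zero_le i)
    omega
  · have hpos : ∀ i, 1 ≤ e i := fun i => le_trans (by omega) (he.1.1 (Fin.zero_le i))
    rw [← pow_add]
    congr 1
    rw [← sum_congr rfl fun i _ => Nat.sub_add_cancel (hpos i), sum_add_distrib]
    simp [add_comm]

lemma sum_monoSeqs_succ_succ (x : R) (n m : ℕ) :
    ∑ e ∈ monoSeqs (n + 1) (m + 1), x ^ (∑ i, e i) =
      ∑ e ∈ monoSeqs n (m + 1), x ^ (∑ i, e i) +
        x ^ (n + 1) * ∑ e ∈ monoSeqs (n + 1) m, x ^ (∑ i, e i) := by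
  rw [← sum_filter_add_sum_filter_not _ (fun e => e 0 = 0), sum_monoSeqs_filter_eq_zero,
    sum_monoSeqs_filter_ne_zero]

lemma one_sub_mul_rescale_mk_one (c : R) :
    (1 - PowerSeries.C c * PowerSeries.X) * PowerSeries.rescale c (PowerSeries.mk 1) = 1 := by
  rw [← PowerSeries.rescale_X, ← map_one (PowerSeries.rescale c), ← map_sub, ← map_mul,
    mul_comm, PowerSeries.mk_one_mul_one_sub_eq_one, map_one]

lemma coeff_prod_rescale_mk_one (x : R) (n m : ℕ) :
    PowerSeries.coeff m (∏ j ∈ range (n + 1), PowerSeries.rescale (x ^ j) (PowerSeries.mk 1)) =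
      ∑ e ∈ monoSeqs n m, x ^ (∑ i, e i) := by
  induction n generalizing m with
  | zero => simp [monoSeqs_zero_left]
  | succ n ihn =>
    induction m with
    | zero =>
      rw [monoSeqs_zero_right, PowerSeries.coeff_zero_eq_constantCoeff, map_prod]
      simp [← PowerSeries.coeff_zero_eq_constantCoeff_apply, PowerSeries.coeff_rescale]
    | succ m ihm =>
      -- the `t^(m+1)` coefficient of `hG` is the `q`-Pascal recurrence `sum_monoSeqs_succ_succ`
      have hG : ∏ j ∈ range (n + 1), PowerSeries.rescale (x ^ j) (PowerSeries.mk 1) =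
          (∏ j ∈ range (n + 2), PowerSeries.rescale (x ^ j) (PowerSeries.mk 1)) *
            (1 - PowerSeries.C (x ^ (n + 1)) * PowerSeries.X) := by
        rw [prod_range_succ _ (n + 1), mul_assoc, mul_comm (PowerSeries.rescale _ _),
          one_sub_mul_rescale_mk_one, mul_one]
      have hcoeff := congrArg (PowerSeries.coeff (m + 1)) hG
      rw [mul_sub, mul_one, map_sub, mul_left_comm, PowerSeries.coeff_C_mul,
        PowerSeries.coeff_succ_mul_X, ihn] at hcoeff
      rw [sum_monoSeqs_succ_succ, hcoeff, ← ihm]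
      ring

lemma ringInverse_prod_one_sub_C_mul_X {ι : Type*} (s : Finset ι) (c : ι → R) :
    Ring.inverse (∏ j ∈ s, (1 - PowerSeries.C (c j) * PowerSeries.X)) =
      ∏ j ∈ s, PowerSeries.rescale (c j) (PowerSeries.mk 1) := by
  have h : (∏ j ∈ s, (1 - PowerSeries.C (c j) * PowerSeries.X)) *
      ∏ j ∈ s, PowerSeries.rescale (c j) (PowerSeries.mk 1) = 1 := by
    rw [← prod_mul_distrib]
    exact prod_eq_one fun j _ => one_sub_mul_rescale_mk_one (c j)
  simpa using (Ring.inverse_mul_eq_iff_eq_mul _ 1 _ (IsUnit.of_mul_eq_one _ h)).2 h.symm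

end MonotoneSequences

section Ranks

variable {a : ℕ} (L : Finset (Fin a))

lemma abs_rkL_succ (c : Fin a) (k : ℕ) : |rkL L (c, k + 1)| = ((a * (k + 1) + c : ℕ) : ℤ) := by
  simp only [rkL, Nat.add_one_ne_zero, if_false]
  split_ifs
  · rw [abs_neg, abs_of_nonneg (by positivity)]; push_cast; ring
  · rw [abs_of_nonneg (by positivity)]; push_cast; ring

lemma rkL_zero (c : Fin a) : rkL L (c, 0) = 0 := by
  simp [rkL]

lemma rkL_succ_neg_iff (c : Fin a) (k : ℕ) : rkL L (c, k + 1) < 0 ↔ c ∈ L := by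
  have : (0 : ℤ) < (k + 1 : ℕ) * a + c := by
    have := c.pos; positivity
  by_cases hc : c ∈ L <;> simp [rkL, hc] <;> push_cast at this <;> linarith

lemma eq_of_rkL_succ_eq {c c' : Fin a} {k k' : ℕ}
    (h : rkL L (c, k + 1) = rkL L (c', k' + 1)) : k = k' := by
  have habs := congrArg abs h
  rw [abs_rkL_succ, abs_rkL_succ, Nat.cast_inj] at habs
  have := congrArg (· / a) habs
  simp only [Nat.mul_add_div c.pos, Nat.div_eq_of_lt c.isLt, Nat.div_eq_of_lt c'.isLt] at this
  omega

end Ranks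

section Descents

variable {a n : ℕ} [NeZero a] (L : Finset (Fin a)) (σ : ColPerm a n)

lemma wval_zero : wval σ 0 = (0, 0) := by
  simp [wval]

lemma wval_succ (p : Fin n) : wval σ ((p : ℕ) + 1) = (σ.2 p, (σ.1 p : ℕ) + 1) := by
  simp [wval, Nat.succ_le_of_lt p.isLt]

lemma mem_DesL_iff {i : ℕ} :
    i ∈ DesL L σ ↔ i < n ∧ rkL L (wval σ (i + 1)) < rkL L (wval σ i) := by
  simp [DesL]

lemma rkL_wval_nonneg_of_forall_notMem_DesL {m : ℕ} (hm : m ≤ n)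
    (h : ∀ i < m, i ∉ DesL L σ) : 0 ≤ rkL L (wval σ m) := by
  induction m with
  | zero => rw [wval_zero, rkL_zero]
  | succ m ih =>
    have hm' := h m m.lt_succ_self
    rw [mem_DesL_iff, not_and, not_lt] at hm'
    exact (ih (by omega) fun i hi => h i (by omega)).trans (hm' (by omega))

lemma mem_DesL_zero_iff : 0 ∈ DesL L σ ↔ ∃ h : 0 < n, σ.2 ⟨0, h⟩ ∈ L := by
  rw [mem_DesL_iff, wval_zero, rkL_zero]
  refine ⟨fun ⟨hn, hlt⟩ => ⟨hn, ?_⟩, fun ⟨hn, hL⟩ => ⟨hn, ?_⟩⟩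
  · rwa [← Fin.val_mk hn, wval_succ, rkL_succ_neg_iff] at hlt
  · rwa [← Fin.val_mk hn, wval_succ, rkL_succ_neg_iff]

def desCount (p : ℕ) : ℕ := #{i ∈ DesL L σ | i ≤ p}

lemma desCount_zero : desCount L σ 0 = if 0 ∈ DesL L σ then 1 else 0 := by
  simp [desCount, filter_eq', apply_ite card]

lemma desCount_succ (p : ℕ) :
    desCount L σ (p + 1) = desCount L σ p + if p + 1 ∈ DesL L σ then 1 else 0 := by
  simp only [desCount, card_filter, ← sum_ite_eq' (DesL L σ) (p + 1) (fun _ => 1),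
    ← sum_add_distrib]
  exact sum_congr rfl fun i _ => by split_ifs <;> omega

lemma desCount_le_desL (p : ℕ) : desCount L σ p ≤ desL L σ := card_filter_le _ _

lemma desCount_eq_desL {p : ℕ} (hp : n ≤ p + 1) : desCount L σ p = desL L σ := by
  rw [desCount, desL, filter_true_of_mem fun i hi => ?_]
  have := ((mem_DesL_iff L σ).1 hi).1
  omega

lemma sum_desCount : ∑ p : Fin n, desCount L σ p = rmajL L σ := by
  simp only [rmajL, desCount, card_filter]
  rw [Fin.sum_univ_eq_sum_range (fun p => ∑ i ∈ DesL L σ, if i ≤ p then 1 else 0), sum_comm]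
  refine sum_congr rfl fun i _ => ?_
  rw [← card_filter, ← Nat.card_Ico]
  congr 1
  ext p
  simp only [mem_filter, mem_range, mem_Ico]
  omega

lemma one_le_desCount_of_mem {p : Fin n} (hp : σ.2 p ∈ L) : 1 ≤ desCount L σ p := by
  by_contra! h0
  have hneg : rkL L (wval σ (p + 1)) < 0 := by rwa [wval_succ, rkL_succ_neg_iff]
  refine hneg.not_ge (rkL_wval_nonneg_of_forall_notMem_DesL L σ p.isLt fun i hi hmem => ?_)
  have : 0 < desCount L σ p := card_pos.2 ⟨i, mem_filter.2 ⟨hmem, by omega⟩⟩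
  omega

end Descents

section FinAdjacent

variable {α : Type*} [Preorder α] {n : ℕ} {f : Fin n → α}

lemma strictMono_fin_of_lt_succ (h : ∀ i (hi : i + 1 < n), f ⟨i, by omega⟩ < f ⟨i + 1, hi⟩) :
    StrictMono f := by
  cases n with
  | zero => exact fun i => i.elim0
  | succ n => exact Fin.strictMono_iff_lt_succ.2 fun i => h i i.succ.isLt

lemma monotone_fin_of_le_succ (h : ∀ i (hi : i + 1 < n), f ⟨i, by omega⟩ ≤ f ⟨i + 1, hi⟩) :
    Monotone f := by
  cases n with
  | zero => exact fun i => i.elim0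
  | succ n => exact Fin.monotone_iff_le_succ.2 fun i => h i i.succ.isLt

end FinAdjacent

lemma eq_sort_of_strictMono_comp {α : Type*} [LinearOrder α] {n : ℕ} {f : Fin n → α}
    {τ : Equiv.Perm (Fin n)} (h : StrictMono (f ∘ τ)) : τ = Tuple.sort f :=
  Tuple.eq_sort_iff.2 ⟨h.monotone, fun _ _ hij heq => absurd heq (h hij).ne⟩

section PositionKey

variable {a n : ℕ} [NeZero a] (L : Finset (Fin a)) (σ : ColPerm a n)

def posKey (h : Fin n → ℕ) (p : Fin n) : ℕ ×ₗ ℤ := toLex (h p, rkL L (wval σ (p + 1)))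

lemma rkL_wval_lt_of_notMem_DesL {p : ℕ} (hp : p + 1 < n) (hd : p + 1 ∉ DesL L σ) :
    rkL L (wval σ (p + 1)) < rkL L (wval σ (p + 1 + 1)) := by
  rw [mem_DesL_iff, not_and, not_lt] at hd
  refine (hd hp).lt_of_ne fun heq => ?_
  rw [wval_succ σ ⟨p, by omega⟩, wval_succ σ ⟨p + 1, hp⟩] at heq
  have := σ.1.injective (Fin.ext (eq_of_rkL_succ_eq L heq))
  simp at this

lemma strictMono_posKey_add_desCount {e : Fin n → ℕ} (he : Monotone e) :
    StrictMono (posKey L σ fun p => e p + desCount L σ p) := by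
  refine strictMono_fin_of_lt_succ fun p hp => ?_
  have hle := he (show (⟨p, by omega⟩ : Fin n) ≤ ⟨p + 1, hp⟩ from Fin.mk_le_mk.2 p.le_succ)
  have hcount := desCount_succ L σ p
  rw [posKey, posKey, Prod.Lex.toLex_lt_toLex']
  by_cases hd : p + 1 ∈ DesL L σ
  · rw [if_pos hd] at hcount
    exact ⟨by simp only; omega, fun heq => by simp only at heq; omega⟩
  · rw [if_neg hd] at hcount
    exact ⟨by simp only; omega, fun _ => rkL_wval_lt_of_notMem_DesL L σ hp hd⟩

variable {σ} {h : Fin n → ℕ}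

lemma desCount_succ_add_le (hk : StrictMono (posKey L σ h)) {p : ℕ} (hp : p + 1 < n) :
    desCount L σ (p + 1) + h ⟨p, by omega⟩ ≤ desCount L σ p + h ⟨p + 1, hp⟩ := by
  have hlt := hk (show (⟨p, by omega⟩ : Fin n) < ⟨p + 1, hp⟩ from Fin.mk_lt_mk.2 p.lt_succ_self)
  rw [posKey, posKey, Prod.Lex.toLex_lt_toLex'] at hlt
  rw [desCount_succ]
  split_ifs with hd
  · rw [mem_DesL_iff] at hd
    have hne : h ⟨p, by omega⟩ ≠ h ⟨p + 1, hp⟩ := fun heq => (hlt.2 heq).asymm hd.2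
    have := hlt.1
    omega
  · have := hlt.1
    omega

lemma desCount_le_of_strictMono_posKey (hk : StrictMono (posKey L σ h))
    (hL : ∀ p, σ.2 p ∈ L → h p ≠ 0) (p : Fin n) : desCount L σ p ≤ h p := by
  obtain ⟨p, hp⟩ := p
  induction p with
  | zero =>
    rw [desCount_zero]
    split_ifs with h0
    · obtain ⟨hn, hmem⟩ := (mem_DesL_zero_iff L σ).1 h0
      exact Nat.one_le_iff_ne_zero.2 (hL _ hmem)
    · exact Nat.zero_le _
  | succ p ih =>
    have := desCount_succ_add_le L hk hp
    have := ih (by omega)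
    simp only at this ⊢
    omega

lemma monotone_sub_desCount (hk : StrictMono (posKey L σ h)) :
    Monotone fun p => h p - desCount L σ p :=
  monotone_fin_of_le_succ fun p hp => by
    have := desCount_succ_add_le L hk hp
    simp only
    omega

lemma desL_le_of_strictMono_posKey (hk : StrictMono (posKey L σ h))
    (hL : ∀ p, σ.2 p ∈ L → h p ≠ 0) {s : ℕ} (hs : ∀ p, h p ≤ s) :
    desL L σ ≤ s ∧ ∀ p, h p - desCount L σ p ≤ s - desL L σ := by
  rcases Nat.eq_zero_or_pos n with rfl | hn
  · simp [desL, DesL]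
  · let last : Fin n := ⟨n - 1, by omega⟩
    have hlast := desCount_eq_desL L σ (p := n - 1) (by omega)
    have hle := desCount_le_of_strictMono_posKey L hk hL last
    have hs' := hs last
    refine ⟨by simp only [last] at hle hs'; omega, fun p => ?_⟩
    have := monotone_sub_desCount L hk (show p ≤ last from Fin.mk_le_mk.2 (by omega))
    simp only [last] at this hle hs'
    omega

end PositionKey

section Sorting

variable {a n : ℕ} (L : Finset (Fin a))

def letters (s : ℕ) : Finset (Fin a × ℕ) := {x ∈ univ ×ˢ range (s + 1) | x.1 ∈ L → x.2 ≠ 0}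

lemma mem_letters {s : ℕ} {x : Fin a × ℕ} : x ∈ letters L s ↔ x.2 ≤ s ∧ (x.1 ∈ L → x.2 ≠ 0) := by
  simp [letters]

def toWord (σ : ColPerm a n) (h : Fin n → ℕ) (k : Fin n) : Fin a × ℕ :=
  (σ.2 (σ.1.symm k), h (σ.1.symm k))

def sortKey (f : Fin n → Fin a × ℕ) (k : Fin n) : ℕ ×ₗ ℤ := toLex ((f k).2, rkL L ((f k).1, k + 1))

lemma sortKey_injective (f : Fin n → Fin a × ℕ) : Function.Injective (sortKey L f) := fun _ _ h =>
  Fin.ext (eq_of_rkL_succ_eq L (congrArg (fun x => (ofLex x).2) h))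

def ofWord (f : Fin n → Fin a × ℕ) : ColPerm a n :=
  (Tuple.sort (sortKey L f), fun p => (f (Tuple.sort (sortKey L f) p)).1)

def heights (f : Fin n → Fin a × ℕ) (p : Fin n) : ℕ := (f (Tuple.sort (sortKey L f) p)).2

lemma toWord_ofWord (f : Fin n → Fin a × ℕ) : toWord (ofWord L f) (heights L f) = f := by
  funext k
  simp [toWord, ofWord, heights]

lemma sum_toWord_snd (σ : ColPerm a n) (h : Fin n → ℕ) : ∑ k, (toWord σ h k).2 = ∑ p, h p :=
  Equiv.sum_comp σ.1.symm h

lemma heights_le_of_mem {s : ℕ} {f : Fin n → Fin a × ℕ}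
    (hf : f ∈ Fintype.piFinset fun _ => letters L s) (p : Fin n) : heights L f p ≤ s :=
  ((mem_letters L).1 (Fintype.mem_piFinset.1 hf _)).1

lemma heights_ne_zero_of_mem {s : ℕ} {f : Fin n → Fin a × ℕ}
    (hf : f ∈ Fintype.piFinset fun _ => letters L s) {p : Fin n} (hp : (ofWord L f).2 p ∈ L) :
    heights L f p ≠ 0 :=
  ((mem_letters L).1 (Fintype.mem_piFinset.1 hf _)).2 hp

variable [NeZero a]

lemma posKey_eq_sortKey_comp (σ : ColPerm a n) (h : Fin n → ℕ) :
    posKey L σ h = sortKey L (toWord σ h) ∘ σ.1 := by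
  funext p
  simp [posKey, sortKey, toWord, wval_succ]

lemma strictMono_posKey_ofWord (f : Fin n → Fin a × ℕ) :
    StrictMono (posKey L (ofWord L f) (heights L f)) := by
  rw [posKey_eq_sortKey_comp, toWord_ofWord]
  exact (Tuple.monotone_sort _).strictMono_of_injective
    ((sortKey_injective L f).comp (Tuple.sort _).injective)

variable {σ : ColPerm a n} {h : Fin n → ℕ}

lemma sort_sortKey_toWord (hk : StrictMono (posKey L σ h)) :
    Tuple.sort (sortKey L (toWord σ h)) = σ.1 :=
  (eq_sort_of_strictMono_comp (posKey_eq_sortKey_comp L σ h ▸ hk)).symm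

lemma ofWord_toWord (hk : StrictMono (posKey L σ h)) : ofWord L (toWord σ h) = σ := by
  ext p <;> simp [ofWord, sort_sortKey_toWord L hk, toWord]

lemma heights_toWord (hk : StrictMono (posKey L σ h)) : heights L (toWord σ h) = h := by
  funext p
  simp [heights, sort_sortKey_toWord L hk, toWord]

end Sorting

section Letters

variable {a : ℕ} (L : Finset (Fin a)) {R : Type*} [CommRing R] (x : R) (s : ℕ)

lemma sum_letters :
    ∑ y ∈ letters L s, x ^ y.2 = a * ∑ j ∈ range (s + 1), x ^ j - #L := by
  have hterm : ∀ y : Fin a × ℕ, (if y.1 ∈ L → y.2 ≠ 0 then x ^ y.2 else 0) =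
      x ^ y.2 - if y.2 = 0 then (if y.1 ∈ L then 1 else 0) else 0 := fun y => by
    by_cases h1 : y.1 ∈ L <;> by_cases h2 : y.2 = 0 <;> simp [h1, h2]
  rw [letters, sum_filter, sum_congr rfl fun y _ => hterm y, sum_sub_distrib, sum_product,
    sum_product]
  simp

lemma pow_eq_sum_words (n : ℕ) :
    (a * ∑ j ∈ range (s + 1), x ^ j - #L : R) ^ n =
      ∑ f ∈ Fintype.piFinset fun _ : Fin n => letters L s, x ^ (∑ k, (f k).2) := by
  rw [← sum_letters, ← Fin.prod_const, prod_univ_sum]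
  exact sum_congr rfl fun f _ => prod_pow_eq_pow_sum _ _ _

end Letters

section Bijection

variable {a : ℕ} [NeZero a] (L : Finset (Fin a)) (n : ℕ)

def permSeqPairs (s : ℕ) : Finset (Σ _ : ColPerm a n, Fin n → ℕ) :=
  ({σ | desL L σ ≤ s} : Finset (ColPerm a n)).sigma fun σ => monoSeqs n (s - desL L σ)

lemma mem_permSeqPairs {s : ℕ} {x : Σ _ : ColPerm a n, Fin n → ℕ} :
    x ∈ permSeqPairs L n s ↔
      desL L x.1 ≤ s ∧ Monotone x.2 ∧ ∀ p, x.2 p ≤ s - desL L x.1 := by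
  simp [permSeqPairs, mem_monoSeqs]

lemma sum_permSeqPairs_eq_sum_words {M : Type*} [AddCommMonoid M] (w : ℕ → M) (s : ℕ) :
    ∑ x ∈ permSeqPairs L n s, w (rmajL L x.1 + ∑ p, x.2 p) =
      ∑ f ∈ Fintype.piFinset fun _ : Fin n => letters L s, w (∑ k, (f k).2) := by
  refine sum_nbij' (fun x => toWord x.1 fun p => x.2 p + desCount L x.1 p)
    (fun f => ⟨ofWord L f, fun p => heights L f p - desCount L (ofWord L f) p⟩)
    (fun x hx => ?_) (fun f hf => ?_) (fun x hx => ?_) (fun f hf => ?_) (fun x hx => ?_)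
  · obtain ⟨hdes, -, hbound⟩ := (mem_permSeqPairs L n).1 hx
    refine Fintype.mem_piFinset.2 fun k => (mem_letters L).2 ⟨?_, fun hmem => ?_⟩
    · have := hbound (x.1.1.symm k)
      have := desCount_le_desL L x.1 (x.1.1.symm k)
      simp only [toWord]
      omega
    · have := one_le_desCount_of_mem L x.1 hmem
      simp only [toWord]
      omega
  · have hk := strictMono_posKey_ofWord L f
    obtain ⟨hdes, hbound⟩ := desL_le_of_strictMono_posKey L hk
      (fun _ => heights_ne_zero_of_mem L hf) (heights_le_of_mem L hf)
    exact (mem_permSeqPairs L n).2 ⟨hdes, monotone_sub_desCount L hk, hbound⟩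
  · obtain ⟨σ, e⟩ := x
    have hk := strictMono_posKey_add_desCount L σ ((mem_permSeqPairs L n).1 hx).2.1
    simp only [ofWord_toWord L hk, heights_toWord L hk, Nat.add_sub_cancel]
  · have hle := desCount_le_of_strictMono_posKey L (strictMono_posKey_ofWord L f)
      (fun _ => heights_ne_zero_of_mem L hf)
    simp only [Nat.sub_add_cancel (hle _)]
    exact toWord_ofWord L f
  · rw [sum_toWord_snd, sum_add_distrib, sum_desCount, add_comm]

end Bijection

variable {a : ℕ} [NeZero a] (L : Finset (Fin a)) (n : ℕ)

lemma coe_Amaj : (Amaj a n L : PowerSeries ℚ[X]) =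
    ∑ σ : ColPerm a n, PowerSeries.C (X ^ rmajL L σ : ℚ[X]) * PowerSeries.X ^ desL L σ := by
  rw [Amaj, ← Polynomial.coeToPowerSeries.ringHom_apply, map_sum]
  simp

lemma coeff_Amaj_mul_prod_rescale (s : ℕ) :
    PowerSeries.coeff s ((Amaj a n L : PowerSeries ℚ[X]) *
        ∏ j ∈ range (n + 1), PowerSeries.rescale (X ^ j : ℚ[X]) (PowerSeries.mk 1)) =
      ∑ x ∈ permSeqPairs L n s, (X : ℚ[X]) ^ (rmajL L x.1 + ∑ p, x.2 p) := by
  rw [coe_Amaj, sum_mul, map_sum, permSeqPairs, sum_sigma, sum_filter]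
  refine sum_congr rfl fun σ _ => ?_
  rw [mul_assoc, PowerSeries.coeff_C_mul, PowerSeries.coeff_X_pow_mul']
  split_ifs
  · simp [coeff_prod_rescale_mk_one, mul_sum, pow_add]
  · rw [mul_zero]

lemma Amaj_mul_prod_rescale :
    (Amaj a n L : PowerSeries ℚ[X]) *
        ∏ j ∈ range (n + 1), PowerSeries.rescale (X ^ j : ℚ[X]) (PowerSeries.mk 1) =
      PowerSeries.mk fun s =>
        ((a : ℚ[X]) * (∑ j ∈ range (s + 1), X ^ j) - (L.card : ℚ[X])) ^ n := by
  ext s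
  rw [coeff_Amaj_mul_prod_rescale, sum_permSeqPairs_eq_sum_words, PowerSeries.coeff_mk,
    pow_eq_sum_words]

end Carlitz

/-- Generalized Carlitz identity (EGF form):
`Σ_{n≥0} (uⁿ/n!) · A_{a,ℓ,n}(t,q)/(t;q)_{n+1} = Σ_{s≥0} t^s e^{u(a[s+1]_q − ℓ)}`,
as formal power series in `u` whose coefficients are formal power series in `t` over
`ℚ[q]`: the coefficient of `uⁿ` on the left is `(1/n!) A_{a,ℓ,n}(t,q)·(t;q)_{n+1}⁻¹`
(the Pochhammer factor is a unit, and `Ring.inverse` is its genuine inverse), and on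
the right it is `(1/n!) Σ_{s≥0} t^s (a[s+1]_q − ℓ)ⁿ`. -/
theorem generalized_carlitz_identity (a : ℕ) [NeZero a] (L : Finset (Fin a)) :
    (PowerSeries.mk (fun n =>
        (n.factorial : ℚ)⁻¹ •
          ((Amaj a n L : PowerSeries (Polynomial ℚ)) *
            Ring.inverse (∏ j ∈ Finset.range (n + 1),
              (1 - PowerSeries.C (X ^ j : Polynomial ℚ) * PowerSeries.X)))) :
      PowerSeries (PowerSeries (Polynomial ℚ))) =
    PowerSeries.mk (fun n =>
      (n.factorial : ℚ)⁻¹ •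
        PowerSeries.mk (fun s =>
          ((a : Polynomial ℚ) * (∑ j ∈ Finset.range (s + 1), X ^ j) -
            (L.card : Polynomial ℚ)) ^ n)) := by
  simp only [Carlitz.ringInverse_prod_one_sub_C_mul_X, Carlitz.Amaj_mul_prod_rescale]
end
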